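/- Let $R$ be a root system in $(V, \langle\cdot,\cdot\rangle)$ and $\tau$ a Dynkin graph automorphism of $R$ (i.e., an automorphism with $\langle \tau(\alpha), \alpha \rangle = 0$ whenever $\tau(\alpha) \neq \alpha$). Then for any $\alpha \in R$, the reflection in $V^{\tau}$ associated to $\alpha_O = \sum_{\alpha' \in O(\alpha)} \alpha'$ satisfies $s_{\alpha_O} = \prod_{\alpha' \in O(\alpha)} s_{\alpha'}$ as maps on $V^{\tau}$, where the product is over the distinct elements of the $\tau$-orbit $O(\alpha)$ of $\alpha$. -/

import Mathlib

/-- The `τ`-orbit of `α` inside the finite root set `R`. -/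
noncomputable def tauOrbit {V : Type*} [NormedAddCommGroup V] [InnerProductSpace ℝ V]
    (R : Finset V) (τ : V ≃ₗ[ℝ] V) (α : V) : Finset V := by
  classical exact R.filter (fun β => ∃ k : ℕ, (τ ^ k) α = β)

/-- The orbit sum `α_O = ∑_{α' ∈ O(α)} α'`. -/
noncomputable def orbitSum {V : Type*} [NormedAddCommGroup V] [InnerProductSpace ℝ V]
    (R : Finset V) (τ : V ≃ₗ[ℝ] V) (α : V) : V :=
  ∑ β ∈ tauOrbit R τ α, β

/-- The orthogonal reflection in the hyperplane orthogonal to `β`. -/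
noncomputable def reflIn {V : Type*} [NormedAddCommGroup V] [InnerProductSpace ℝ V]
    (β : V) : V → V :=
  fun v => v - ((2 * inner ℝ v β / inner ℝ β β : ℝ)) • β

/-!
On `V^τ` all roots of an orbit `O` have the same inner product `c` with `v`, and they all have
the same length `d`. Being pairwise orthogonal, `⟪v, α_O⟫ = |O| c` and `⟪α_O, α_O⟫ = |O| d`, so
`s_{α_O} v = v - (2c/d) ∑_{β ∈ O} β`; and the product of the commuting reflections `s_β`,
`β ∈ O`, subtracts the orthogonal components `(2c/d) β` one at a time, giving the same vector. Since `τ` permutes the orbit, it fixes `α_O`, so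
`s_{α_O}` preserves `V^τ`.
-/

section Reflections

variable {V : Type*} [NormedAddCommGroup V] [InnerProductSpace ℝ V]

lemma map_reflIn_of_map_eq (f : V →ₗ[ℝ] V) {β v : V} (hβ : f β = β) (hv : f v = v) :
    f (reflIn β v) = reflIn β v := by
  simp only [reflIn, map_sub, map_smul, hβ, hv]

lemma foldr_comp_map_reflIn_of_pairwise (L : List V)
    (hL : L.Pairwise (fun β γ => (inner ℝ β γ : ℝ) = 0)) (v : V) :
    (L.map reflIn).foldr (fun F G => F ∘ G) id v =
      v - (L.map (fun β => ((2 * inner ℝ v β / inner ℝ β β : ℝ)) • β)).sum := by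
  induction L with
  | nil => simp
  | cons β L ih =>
    obtain ⟨hβL, hL⟩ := List.pairwise_cons.mp hL
    set w := (L.map (fun γ => ((2 * inner ℝ v γ / inner ℝ γ γ : ℝ)) • γ)).sum
    have hw : (inner ℝ w β : ℝ) = 0 := by
      rw [← Submodule.mem_orthogonal_singleton_iff_inner_left]
      refine list_sum_mem fun x hx => ?_
      obtain ⟨γ, hγ, rfl⟩ := List.mem_map.mp hx
      exact Submodule.smul_mem _ _
        (Submodule.mem_orthogonal_singleton_iff_inner_right.mpr (hβL γ hγ))
    simp only [List.map_cons, List.foldr_cons, Function.comp_apply, List.sum_cons, ih hL]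
    simp only [reflIn, inner_sub_left, hw, sub_zero]
    abel

lemma foldr_comp_map_reflIn_toList (O : Finset V)
    (hO : (O : Set V).Pairwise (fun β γ => (inner ℝ β γ : ℝ) = 0)) (v : V) :
    (O.toList.map reflIn).foldr (fun F G => F ∘ G) id v =
      v - ∑ β ∈ O, ((2 * inner ℝ v β / inner ℝ β β : ℝ)) • β := by
  rw [foldr_comp_map_reflIn_of_pairwise, Finset.sum_map_toList]
  exact O.nodup_toList.imp_of_mem fun hβ hγ hne =>
    hO (Finset.mem_toList.mp hβ) (Finset.mem_toList.mp hγ) hne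

lemma reflIn_sum_eq_foldr_comp_map_reflIn (O : Finset V) (hne : O.Nonempty)
    (hO : (O : Set V).Pairwise (fun β γ => (inner ℝ β γ : ℝ) = 0)) {v : V} {c d : ℝ}
    (hv : ∀ β ∈ O, (inner ℝ v β : ℝ) = c) (hd : ∀ β ∈ O, (inner ℝ β β : ℝ) = d) :
    reflIn (∑ β ∈ O, β) v = (O.toList.map reflIn).foldr (fun F G => F ∘ G) id v := by
  have hvsum : (inner ℝ v (∑ β ∈ O, β) : ℝ) = O.card * c := by
    rw [inner_sum, Finset.sum_congr rfl hv, Finset.sum_const, nsmul_eq_mul]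
  have hsum : (inner ℝ (∑ β ∈ O, β) (∑ β ∈ O, β) : ℝ) = O.card * d := by
    have hβsum : ∀ β ∈ O, (inner ℝ β (∑ γ ∈ O, γ) : ℝ) = d := fun β hβ => by
      rw [inner_sum, Finset.sum_eq_single_of_mem β hβ fun γ hγ hγβ => hO hβ hγ hγβ.symm, hd β hβ]
    rw [sum_inner, Finset.sum_congr rfl hβsum, Finset.sum_const, nsmul_eq_mul]
  have hcard : (O.card : ℝ) ≠ 0 := Nat.cast_ne_zero.mpr hne.card_pos.ne'
  rw [foldr_comp_map_reflIn_toList O hO, reflIn]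
  simp only [hvsum, hsum, Finset.smul_sum]
  refine congrArg (v - ·) (Finset.sum_congr rfl fun β hβ => ?_)
  rw [hv β hβ, hd β hβ, mul_left_comm, mul_div_mul_left _ _ hcard]

section Orbit

variable {R : Finset V} {τ : V ≃ₗ[ℝ] V} {α : V}

lemma mem_tauOrbit {β : V} : β ∈ tauOrbit R τ α ↔ β ∈ R ∧ ∃ k : ℕ, (τ ^ k) α = β := by
  classical
  simp only [tauOrbit, Finset.mem_filter]

lemma self_mem_tauOrbit (hα : α ∈ R) : α ∈ tauOrbit R τ α :=
  mem_tauOrbit.mpr ⟨hα, 0, rfl⟩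

lemma inner_pow_apply_pow_apply (hiso : ∀ v w : V, (inner ℝ (τ v) (τ w) : ℝ) = inner ℝ v w)
    (k : ℕ) (x y : V) : (inner ℝ ((τ ^ k) x) ((τ ^ k) y) : ℝ) = inner ℝ x y := by
  induction k with
  | zero => rfl
  | succ k ih => rw [pow_succ', LinearEquiv.mul_apply, LinearEquiv.mul_apply, hiso, ih]

lemma inner_self_eq_of_mem_tauOrbit
    (hiso : ∀ v w : V, (inner ℝ (τ v) (τ w) : ℝ) = inner ℝ v w) {β : V}
    (hβ : β ∈ tauOrbit R τ α) : (inner ℝ β β : ℝ) = inner ℝ α α := by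
  obtain ⟨-, k, rfl⟩ := mem_tauOrbit.mp hβ
  exact inner_pow_apply_pow_apply hiso k α α

lemma inner_eq_of_mem_tauOrbit
    (hiso : ∀ v w : V, (inner ℝ (τ v) (τ w) : ℝ) = inner ℝ v w) {v β : V} (hv : τ v = v)
    (hβ : β ∈ tauOrbit R τ α) : (inner ℝ v β : ℝ) = inner ℝ v α := by
  obtain ⟨-, k, rfl⟩ := mem_tauOrbit.mp hβ
  have hvk : (τ ^ k) v = v := by rw [LinearEquiv.pow_apply, Function.iterate_fixed hv]
  conv_lhs => rw [← hvk]
  exact inner_pow_apply_pow_apply hiso k v α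

lemma image_tauOrbit [DecidableEq V] (hτR : ∀ β ∈ R, τ β ∈ R) :
    (tauOrbit R τ α).image τ = tauOrbit R τ α := by
  refine Finset.eq_of_subset_of_card_le (fun β hβ => ?_)
    (Finset.card_image_of_injective _ τ.injective).ge
  obtain ⟨γ, hγ, rfl⟩ := Finset.mem_image.mp hβ
  obtain ⟨hγR, k, rfl⟩ := mem_tauOrbit.mp hγ
  exact mem_tauOrbit.mpr ⟨hτR _ hγR, k + 1, by rw [pow_succ', LinearEquiv.mul_apply]⟩

lemma map_orbitSum (hτR : ∀ β ∈ R, τ β ∈ R) : τ (orbitSum R τ α) = orbitSum R τ α := by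
  classical
  calc τ (orbitSum R τ α) = ∑ β ∈ tauOrbit R τ α, τ β := map_sum τ _ _
    _ = ∑ β ∈ (tauOrbit R τ α).image τ, β :=
      (Finset.sum_image (f := id) fun _ _ _ _ h => τ.injective h).symm
    _ = orbitSum R τ α := by rw [image_tauOrbit hτR, orbitSum]

end Orbit

end Reflections

theorem stmt_7_general {V : Type*} [NormedAddCommGroup V] [InnerProductSpace ℝ V]
    (R : Finset V)
    (τ : V ≃ₗ[ℝ] V)
    (hiso : ∀ v w : V, (inner ℝ (τ v) (τ w) : ℝ) = inner ℝ v w)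
    (hτR : ∀ α ∈ R, τ α ∈ R)
    (α : V) (hα : α ∈ R)
    -- the members of the orbit are pairwise orthogonal:
    (horth : ∀ β ∈ tauOrbit R τ α, ∀ γ ∈ tauOrbit R τ α, β ≠ γ →
      (inner ℝ β γ : ℝ) = 0) :
    ∀ v : V, τ v = v →
      (reflIn (orbitSum R τ α) v =
        ((tauOrbit R τ α).toList.map reflIn).foldr (fun F G => F ∘ G) id v) ∧
      τ (reflIn (orbitSum R τ α) v) = reflIn (orbitSum R τ α) v := by
  intro v hv
  exact ⟨reflIn_sum_eq_foldr_comp_map_reflIn _ ⟨α, self_mem_tauOrbit hα⟩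
      horth (fun _ => inner_eq_of_mem_tauOrbit hiso hv)
      (fun _ => inner_self_eq_of_mem_tauOrbit hiso),
    map_reflIn_of_map_eq τ.toLinearMap (map_orbitSum hτR) hv⟩

/-- Let `τ` be a Dynkin graph automorphism of a root system `R`
(so that the roots in an orbit `O(α)` are pairwise orthogonal). On the fixed subspace
`V^τ`, the reflection `s_{α_O}` associated to the orbit sum `α_O` preserves `V^τ` and
equals the product `∏_{α' ∈ O(α)} s_{α'}` of the (commuting) reflections in the
members of the orbit. -/
theorem stmt_7 {V : Type*} [NormedAddCommGroup V] [InnerProductSpace ℝ V]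
    (R : Finset V)
    (hspan : Submodule.span ℝ (R : Set V) = ⊤)
    (h0 : (0 : V) ∉ R)
    (hrefl : ∀ α ∈ R, ∀ β ∈ R,
      β - ((2 * inner ℝ β α / inner ℝ α α : ℝ)) • α ∈ R)
    (hint : ∀ α ∈ R, ∀ β ∈ R, ∃ n : ℤ, (2 * inner ℝ β α / inner ℝ α α : ℝ) = (n : ℝ))
    (τ : V ≃ₗ[ℝ] V)
    (hiso : ∀ v w : V, (inner ℝ (τ v) (τ w) : ℝ) = inner ℝ v w)
    (hτR : ∀ α ∈ R, τ α ∈ R)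
    (m : ℕ) (hm : 0 < m) (hord : τ ^ m = 1)
    (hdynkin : ∀ α ∈ R, τ α ≠ α → (inner ℝ (τ α) α : ℝ) = 0)
    (α : V) (hα : α ∈ R)
    -- the members of the orbit are pairwise orthogonal:
    (horth : ∀ β ∈ tauOrbit R τ α, ∀ γ ∈ tauOrbit R τ α, β ≠ γ →
      (inner ℝ β γ : ℝ) = 0) :
    ∀ v : V, τ v = v →
      (reflIn (orbitSum R τ α) v =
        ((tauOrbit R τ α).toList.map reflIn).foldr (fun F G => F ∘ G) id v) ∧
      τ (reflIn (orbitSum R τ α) v) = reflIn (orbitSum R τ α) v :=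
  stmt_7_general R τ hiso hτR α hα horth
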